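/- arXiv:cs/0511028 — 5 statements merged into one kernel-verified Lean document; each statement's English description precedes it below -/
import Mathlib

section
/- Let Φ₁, …, Φ_m and Φ'₁, …, Φ'_m be correlation matrices with Φ_i and Φ'_i both of size n_i×n_i. If the vector of eigenvalues of the Kronecker product Φ₁⊗Φ₂⊗⋯⊗Φ_m is majorized by the vector of eigenvalues of Φ'₁⊗Φ'₂⊗⋯⊗Φ'_m, then the products of correlation figures satisfy ∏_{i=1}^m c(Φ_i) ≤ ∏_{i=1}^m c(Φ'_i). -/
open Matrix
open scoped ComplexOrder

noncomputable section

/-- Sum of the `k` largest components of a finite real vector, expressed as the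
supremum of sums over subsets of cardinality `k`. -/
def sumKLargest {ι : Type*} [Fintype ι] (a : ι → ℝ) (k : ℕ) : ℝ :=
  sSup {x : ℝ | ∃ s : Finset ι, s.card = k ∧ x = ∑ i ∈ s, a i}

/-- `a` is majorized by `b`: for every `k`, the sum of the `k` largest
components of `a` is at most that of `b`, and the total sums are equal. -/
def MajorizedBy {ι ι' : Type*} [Fintype ι] [Fintype ι'] (a : ι → ℝ) (b : ι' → ℝ) : Prop :=
  (∀ k : ℕ, k ≤ Fintype.card ι → sumKLargest a k ≤ sumKLargest b k) ∧
    ∑ i, a i = ∑ i, b i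

/-- The correlation figure `ζ(Φ) = tr(Φ²)/n²`. -/
def corrFig {ι : Type*} [Fintype ι] (Φ : Matrix ι ι ℂ) : ℝ :=
  (Matrix.trace (Φ * Φ)).re / (Fintype.card ι : ℝ) ^ 2

/-- `m`-fold Kronecker product of a family of square matrices, realized on the
index type `Π i, Fin (n i)`: the `(x, y)` entry is `∏ i, Φ i (x i) (y i)`. -/
def kronFamily {m : ℕ} {n : Fin m → ℕ}
    (Φ : ∀ i, Matrix (Fin (n i)) (Fin (n i)) ℂ) :
    Matrix (∀ i, Fin (n i)) (∀ i, Fin (n i)) ℂ :=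
  Matrix.of fun x y => ∏ i, Φ i (x i) (y i)
/-! The product of correlation figures is the correlation figure of the Kronecker product, since
`tr((⊗ᵢ Φᵢ)²) = ∏ᵢ tr(Φᵢ²)`, and for a Hermitian matrix `tr(Φ²)` is the sum of the squared
eigenvalues. So it suffices that `x ↦ ∑ xᵢ²` is Schur convex. If `a` is majorized by `b` and `k`
components of `a` exceed `t`, then `∑ (aᵢ - t)⁺` is at most the sum of the `k` largest `aᵢ` minus
`k t`, hence at most the same expression for `b`, which is at most `∑ (bᵢ - t)⁺`. Integrating
`(x + M)² = 2 ∫_{-M}^{M} (x - t)⁺ dt` (valid for `|x| ≤ M`) gives `∑ (aᵢ + M)² ≤ ∑ (bᵢ + M)²`,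
and the linear terms cancel because `∑ aᵢ = ∑ bᵢ`. -/

section Majorization

variable {ι : Type*} [Fintype ι]

theorem sum_le_sumKLargest (a : ι → ℝ) (s : Finset ι) :
    ∑ i ∈ s, a i ≤ sumKLargest a s.card := by
  refine le_csSup ?_ ⟨s, rfl, rfl⟩
  refine ((Set.finite_range fun s : Finset ι => ∑ i ∈ s, a i).subset ?_).bddAbove
  rintro _ ⟨s, -, rfl⟩
  exact ⟨s, rfl⟩

theorem sumKLargest_le_mul_add_sum_max (a : ι → ℝ) {k : ℕ} (hk : k ≤ Fintype.card ι) (t : ℝ) :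
    sumKLargest a k ≤ k * t + ∑ i, max (a i - t) 0 := by
  obtain ⟨s, -, hs⟩ := Finset.exists_subset_card_eq (s := Finset.univ) (n := k) (by simpa using hk)
  refine csSup_le ⟨_, s, hs, rfl⟩ ?_
  rintro _ ⟨s, rfl, rfl⟩
  calc ∑ i ∈ s, a i = s.card * t + ∑ i ∈ s, (a i - t) := by
        rw [Finset.sum_sub_distrib, Finset.sum_const, nsmul_eq_mul]; ring
    _ ≤ s.card * t + ∑ i, max (a i - t) 0 := by
        gcongr
        calc ∑ i ∈ s, (a i - t) ≤ ∑ i ∈ s, max (a i - t) 0 :=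
              Finset.sum_le_sum fun i _ => le_max_left _ _
          _ ≤ ∑ i, max (a i - t) 0 := Finset.sum_le_sum_of_subset_of_nonneg
              (Finset.subset_univ s) fun i _ _ => le_max_right _ _

theorem MajorizedBy.sum_max_sub_le {a b : ι → ℝ} (h : MajorizedBy a b) (t : ℝ) :
    ∑ i, max (a i - t) 0 ≤ ∑ i, max (b i - t) 0 := by
  classical
  set s := Finset.univ.filter fun i => t < a i
  have hs : ∑ i, max (a i - t) 0 = ∑ i ∈ s, a i - s.card * t := by
    rw [← nsmul_eq_mul, ← Finset.sum_const, ← Finset.sum_sub_distrib, Finset.sum_filter]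
    refine Finset.sum_congr rfl fun i _ => ?_
    split_ifs with hi
    · exact max_eq_left (by linarith)
    · exact max_eq_right (by linarith)
  have hcard : s.card ≤ Fintype.card ι := Finset.card_le_univ s
  linarith [sum_le_sumKLargest a s, h.1 _ hcard, sumKLargest_le_mul_add_sum_max b hcard t]

theorem integral_max_sub_zero {c d x : ℝ} (hcx : c ≤ x) (hxd : x ≤ d) :
    ∫ t in c..d, max (x - t) 0 = (x - c) ^ 2 / 2 := by
  have hcont : Continuous fun t : ℝ => max (x - t) 0 := by fun_prop
  rw [← intervalIntegral.integral_add_adjacent_intervals (hcont.intervalIntegrable c x)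
    (hcont.intervalIntegrable x d)]
  have hleft : ∫ t in c..x, max (x - t) 0 = ∫ t in c..x, (x - t) :=
    intervalIntegral.integral_congr fun t ht => by
      rw [Set.uIcc_of_le hcx] at ht
      exact max_eq_left (sub_nonneg.2 ht.2)
  have hright : ∫ t in x..d, max (x - t) 0 = ∫ _ in x..d, (0 : ℝ) :=
    intervalIntegral.integral_congr fun t ht => by
      rw [Set.uIcc_of_le hxd] at ht
      exact max_eq_right (sub_nonpos.2 ht.1)
  rw [hleft, hright, intervalIntegral.integral_zero, add_zero,
    intervalIntegral.integral_sub intervalIntegrable_const intervalIntegral.intervalIntegrable_id,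
    intervalIntegral.integral_const, integral_id]
  simp only [smul_eq_mul]
  ring

theorem MajorizedBy.sum_sq_le {a b : ι → ℝ} (h : MajorizedBy a b) :
    ∑ i, a i ^ 2 ≤ ∑ i, b i ^ 2 := by
  set M := ∑ i, |a i| + ∑ i, |b i|
  have hM : 0 ≤ M := by positivity
  have hsq : ∀ x, |x| ≤ M → (x + M) ^ 2 = 2 * ∫ t in -M..M, max (x - t) 0 := fun x hx => by
    rw [integral_max_sub_zero (by linarith [neg_abs_le x]) (by linarith [le_abs_self x])]
    ring
  have ha : ∀ i, |a i| ≤ M := fun i =>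
    (Finset.single_le_sum (fun j _ => abs_nonneg (a j)) (Finset.mem_univ i)).trans
      (le_add_of_nonneg_right (by positivity))
  have hb : ∀ i, |b i| ≤ M := fun i =>
    (Finset.single_le_sum (fun j _ => abs_nonneg (b j)) (Finset.mem_univ i)).trans
      (le_add_of_nonneg_left (by positivity))
  have hshift : ∑ i, (a i + M) ^ 2 ≤ ∑ i, (b i + M) ^ 2 := by
    simp only [hsq _ (ha _), hsq _ (hb _), ← Finset.mul_sum]
    rw [← intervalIntegral.integral_finsetSum, ← intervalIntegral.integral_finsetSum]
    · gcongr
      refine intervalIntegral.integral_mono_on (neg_le_self hM) ?_ ?_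
        fun t _ => h.sum_max_sub_le t
      all_goals exact Continuous.intervalIntegrable (by fun_prop) _ _
    all_goals exact fun i _ => Continuous.intervalIntegrable (by fun_prop) _ _
  simp only [add_sq, Finset.sum_add_distrib, ← Finset.sum_mul, ← Finset.mul_sum, h.2] at hshift
  linarith

end Majorization

theorem Matrix.IsHermitian.trace_mul_self {𝕜 n : Type*} [RCLike 𝕜] [Fintype n] [DecidableEq n]
    {A : Matrix n n 𝕜} (hA : A.IsHermitian) :
    (A * A).trace = ∑ i, (hA.eigenvalues i : 𝕜) ^ 2 := by
  conv_lhs => rw [hA.spectral_theorem, ← map_mul, Unitary.conjStarAlgAut_apply, trace_mul_cycle,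
    Unitary.coe_star_mul_self, one_mul, diagonal_mul_diagonal, trace_diagonal]
  simp [sq]

theorem Matrix.IsHermitian.corrFig_eq {ι : Type*} [Fintype ι] [DecidableEq ι]
    {A : Matrix ι ι ℂ} (hA : A.IsHermitian) :
    corrFig A = (∑ i, hA.eigenvalues i ^ 2) / (Fintype.card ι : ℝ) ^ 2 := by
  rw [corrFig, hA.trace_mul_self]
  norm_cast

section Kronecker

variable {m : ℕ} {n : Fin m → ℕ}

theorem kronFamily_mul (Φ Ψ : ∀ i, Matrix (Fin (n i)) (Fin (n i)) ℂ) :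
    kronFamily Φ * kronFamily Ψ = kronFamily fun i => Φ i * Ψ i := by
  ext x y
  simp only [kronFamily, mul_apply, of_apply, ← Finset.prod_mul_distrib]
  exact (Fintype.prod_sum (fun i z => Φ i (x i) z * Ψ i z (y i))).symm

theorem trace_kronFamily (Φ : ∀ i, Matrix (Fin (n i)) (Fin (n i)) ℂ) :
    (kronFamily Φ).trace = ∏ i, (Φ i).trace := by
  simp only [trace, diag, kronFamily, of_apply]
  exact (Fintype.prod_sum fun i j => Φ i j j).symm

theorem corrFig_kronFamily {Φ : ∀ i, Matrix (Fin (n i)) (Fin (n i)) ℂ}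
    (hΦ : ∀ i, (Φ i).IsHermitian) :
    corrFig (kronFamily Φ) = ∏ i, corrFig (Φ i) := by
  simp only [corrFig, kronFamily_mul, trace_kronFamily, (hΦ _).trace_mul_self, Fintype.card_pi,
    Fintype.card_fin, Finset.prod_div_distrib, Nat.cast_prod, Finset.prod_pow]
  norm_cast

end Kronecker

theorem corrFig_prod_schur_monotone_general
    (m : ℕ) (n : Fin m → ℕ)
    (Φ Φ' : ∀ i, Matrix (Fin (n i)) (Fin (n i)) ℂ)
    (hΦ : ∀ i, (Φ i).PosSemidef) (hΦ' : ∀ i, (Φ' i).PosSemidef)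
    (hK : (kronFamily Φ).IsHermitian) (hK' : (kronFamily Φ').IsHermitian)
    (hmaj : MajorizedBy hK.eigenvalues hK'.eigenvalues) :
    ∏ i, corrFig (Φ i) ≤ ∏ i, corrFig (Φ' i) := by
  rw [← corrFig_kronFamily fun i => (hΦ i).isHermitian,
    ← corrFig_kronFamily fun i => (hΦ' i).isHermitian, hK.corrFig_eq, hK'.corrFig_eq]
  exact div_le_div_of_nonneg_right hmaj.sum_sq_le (by positivity)

/-- **Schur monotonicity of products of correlation figures** (Property 2):
if the eigenvalues of `Φ₁ ⊗ ⋯ ⊗ Φ_m` are majorized by those of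
`Φ'₁ ⊗ ⋯ ⊗ Φ'_m`, then `∏ᵢ ζ(Φᵢ) ≤ ∏ᵢ ζ(Φ'ᵢ)`. -/
theorem corrFig_prod_schur_monotone
    (m : ℕ) (n : Fin m → ℕ)
    (Φ Φ' : ∀ i, Matrix (Fin (n i)) (Fin (n i)) ℂ)
    (hΦ : ∀ i, (Φ i).PosSemidef) (hΦ' : ∀ i, (Φ' i).PosSemidef)
    (hd : ∀ i j, Φ i j j = 1) (hd' : ∀ i j, Φ' i j j = 1)
    (hK : (kronFamily Φ).IsHermitian) (hK' : (kronFamily Φ').IsHermitian)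
    (hmaj : MajorizedBy hK.eigenvalues hK'.eigenvalues) :
    ∏ i, corrFig (Φ i) ≤ ∏ i, corrFig (Φ' i) :=
  corrFig_prod_schur_monotone_general m n Φ Φ' hΦ hΦ' hK hK' hmaj

end
end

section
/- Let A be an n×n Hermitian matrix and let Φ be an n×n correlation matrix (Hermitian positive semidefinite with all diagonal entries equal to 1). Then the vector of eigenvalues of the Hadamard (entrywise) product A∘Φ is majorized by the vector of eigenvalues of A. -/
/-!
Schur's argument. Write `A = ∑ₗ λₗ wₗ wₗᴴ` in an orthonormal eigenbasis `w` of `A` and let `v` be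
an orthonormal eigenbasis of `A ∘ Φ`. Then `μₖ = vₖᴴ (A ∘ Φ) vₖ = ∑ₗ dₖₗ λₗ` with
`dₖₗ = vₖᴴ ((wₗ wₗᴴ) ∘ Φ) vₖ`, and `d` is doubly stochastic: its entries are nonnegative because
`X ↦ X ∘ Φ` preserves positivity (Schur product theorem), and its rows and columns sum to one
because this map fixes `1` and preserves traces (the diagonal of `Φ` is `1`). Finally, a sum of
`k` entries of `d λ` is a combination of the `λₗ` with weights in `[0, 1]` summing to `k`, hence at
most the sum of the `k` largest `λₗ`.
-/

open Matrix
open scoped ComplexOrder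

noncomputable section

open scoped Matrix

lemma hadamard_isHermitian {n : ℕ} {A B : Matrix (Fin n) (Fin n) ℂ}
    (hA : A.IsHermitian) (hB : B.IsHermitian) :
    (Matrix.hadamard A B).IsHermitian := by
  ext i j
  simp only [Matrix.conjTranspose_apply, Matrix.hadamard_apply, star_mul',
    hA.apply, hB.apply]

section Majorization

variable {ι : Type*} [Fintype ι]

lemma le_sumKLargest (a : ι → ℝ) {s : Finset ι} : ∑ i ∈ s, a i ≤ sumKLargest a s.card := by
  refine le_csSup ((Set.finite_range fun t : Finset ι => ∑ i ∈ t, a i).subset ?_).bddAbove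
    ⟨s, rfl, rfl⟩
  rintro x ⟨t, -, rfl⟩
  exact ⟨t, rfl⟩

lemma sumKLargest_le (a : ι → ℝ) {k : ℕ} (hk : k ≤ Fintype.card ι) {x : ℝ}
    (h : ∀ s : Finset ι, s.card = k → ∑ i ∈ s, a i ≤ x) : sumKLargest a k ≤ x := by
  obtain ⟨t, -, ht⟩ := Finset.exists_subset_card_eq (s := Finset.univ) (by simpa using hk)
  refine csSup_le ⟨_, t, ht, rfl⟩ ?_
  rintro y ⟨s, hs, rfl⟩
  exact h s hs

lemma exists_finset_card_eq_threshold (a : ι → ℝ) {k : ℕ} (hk : k ≤ Fintype.card ι) :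
    ∃ (t : Finset ι) (θ : ℝ), t.card = k ∧ (∀ i ∈ t, θ ≤ a i) ∧ ∀ j ∉ t, a j ≤ θ := by
  classical
  induction k with
  | zero =>
    exact ⟨∅, ∑ j, |a j|, rfl, by simp,
      fun j _ => (le_abs_self _).trans (Finset.single_le_sum (fun j _ => abs_nonneg (a j))
        (Finset.mem_univ j))⟩
  | succ k ih =>
    obtain ⟨t, θ, ht, hle, hge⟩ := ih (by omega)
    have hne : tᶜ.Nonempty := by
      rw [← Finset.card_pos, Finset.card_compl, ht]
      omega
    obtain ⟨i₀, hi₀, hmax⟩ := tᶜ.exists_max_image a hne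
    rw [Finset.mem_compl] at hi₀
    refine ⟨insert i₀ t, a i₀, by rw [Finset.card_insert_of_notMem hi₀, ht], ?_, ?_⟩
    · rintro i hi
      rcases Finset.mem_insert.mp hi with rfl | hi
      · exact le_rfl
      · exact (hge i₀ hi₀).trans (hle i hi)
    · intro j hj
      exact hmax j (Finset.mem_compl.mpr fun h => hj (Finset.mem_insert_of_mem h))

lemma sum_mul_le_sumKLargest (a c : ι → ℝ) {k : ℕ} (hk : k ≤ Fintype.card ι)
    (hc₀ : ∀ i, 0 ≤ c i) (hc₁ : ∀ i, c i ≤ 1) (hc : ∑ i, c i = k) :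
    ∑ i, c i * a i ≤ sumKLargest a k := by
  classical
  obtain ⟨t, θ, rfl, hle, hge⟩ := exists_finset_card_eq_threshold a hk
  -- `θ` drops out of this identity because `∑ c = #t`
  have key : ∑ i, c i * a i + ∑ i ∈ t, (1 - c i) * (a i - θ) + ∑ j ∈ tᶜ, c j * (θ - a j)
      = ∑ i ∈ t, a i := by
    rw [← Finset.sum_add_sum_compl t] at hc ⊢
    simp only [mul_sub, sub_mul, one_mul, Finset.sum_sub_distrib, ← Finset.sum_mul,
      Finset.sum_const, nsmul_eq_mul] at hc ⊢
    linear_combination θ * hc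
  have h₁ : 0 ≤ ∑ i ∈ t, (1 - c i) * (a i - θ) :=
    Finset.sum_nonneg fun i hi => mul_nonneg (by linarith [hc₁ i]) (by linarith [hle i hi])
  have h₂ : 0 ≤ ∑ j ∈ tᶜ, c j * (θ - a j) :=
    Finset.sum_nonneg fun j hj => mul_nonneg (hc₀ j) (by linarith [hge j (Finset.mem_compl.mp hj)])
  linarith [le_sumKLargest a (s := t)]

theorem majorizedBy_mulVec_of_mem_doublyStochastic [DecidableEq ι] {M : Matrix ι ι ℝ}
    (hM : M ∈ doublyStochastic ℝ ι) (x : ι → ℝ) : MajorizedBy (M *ᵥ x) x := by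
  obtain ⟨hM₀, hrow, hcol⟩ := mem_doublyStochastic_iff_sum.mp hM
  refine ⟨fun k hk => sumKLargest_le _ hk fun s hs => ?_, sum_mulVec_of_mem_doublyStochastic hM⟩
  calc ∑ i ∈ s, (M *ᵥ x) i = ∑ j, (∑ i ∈ s, M i j) * x j := by
        simp only [mulVec, dotProduct, Finset.sum_mul]
        exact Finset.sum_comm
    _ ≤ sumKLargest x k := by
      refine sum_mul_le_sumKLargest x _ hk (fun j => Finset.sum_nonneg fun i _ => hM₀ i j)
        (fun j => (hcol j).symm ▸ Finset.sum_le_sum_of_subset_of_nonneg s.subset_univ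
          fun i _ _ => hM₀ i j) ?_
      rw [Finset.sum_comm, Finset.sum_congr rfl fun i _ => hrow i]
      simp [hs]

end Majorization

namespace OrthonormalBasis
variable {𝕜 ι : Type*} [RCLike 𝕜] [Fintype ι]

lemma sum_vecMulVec_self_star [DecidableEq ι] (b : OrthonormalBasis ι 𝕜 (EuclideanSpace 𝕜 ι)) :
    ∑ i, vecMulVec ⇑(b i) (star ⇑(b i)) = 1 := by
  calc ∑ i, vecMulVec ⇑(b i) (star ⇑(b i))
      = toEuclideanLin.symm (∑ i, InnerProductSpace.rankOne 𝕜 (b i) (b i) : _ →L[𝕜] _) := by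
        simp only [ContinuousLinearMap.toLinearMap_sum, map_sum,
          InnerProductSpace.symm_toEuclideanLin_rankOne]
    _ = 1 := by
        rw [b.sum_rankOne_eq_id, ContinuousLinearMap.coe_id, LinearEquiv.symm_apply_eq]
        exact (toLpLin_one 2).symm

lemma star_dotProduct_self (b : OrthonormalBasis ι 𝕜 (EuclideanSpace 𝕜 ι)) (i : ι) :
    star ⇑(b i) ⬝ᵥ ⇑(b i) = 1 := by
  rw [dotProduct_comm, ← EuclideanSpace.inner_eq_star_dotProduct, inner_self_eq_norm_sq_to_K,
    b.orthonormal.1 i]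
  simp

lemma sum_star_dotProduct_mulVec [DecidableEq ι] (b : OrthonormalBasis ι 𝕜 (EuclideanSpace 𝕜 ι))
    (M : Matrix ι ι 𝕜) : ∑ i, star ⇑(b i) ⬝ᵥ M *ᵥ ⇑(b i) = M.trace := by
  conv_rhs => rw [← M.mul_one, ← b.sum_vecMulVec_self_star]
  simp only [Matrix.mul_sum, mul_vecMulVec, trace_sum, trace_vecMulVec, dotProduct_comm]

end OrthonormalBasis

namespace Matrix
variable {𝕜 ι : Type*} [RCLike 𝕜] [Fintype ι] [DecidableEq ι]

lemma IsHermitian.eq_sum_eigenvalues_smul_vecMulVec {A : Matrix ι ι 𝕜} (hA : A.IsHermitian) :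
    A = ∑ i, (hA.eigenvalues i : 𝕜) •
      vecMulVec ⇑(hA.eigenvectorBasis i) (star ⇑(hA.eigenvectorBasis i)) := by
  conv_lhs => rw [← A.mul_one, ← hA.eigenvectorBasis.sum_vecMulVec_self_star]
  simp only [Matrix.mul_sum, mul_vecMulVec, hA.mulVec_eigenvectorBasis,
    RCLike.real_smul_eq_coe_smul (K := 𝕜), smul_vecMulVec]

structure IsDoublyStochasticMap (T : Matrix ι ι 𝕜 →ₗ[𝕜] Matrix ι ι 𝕜) : Prop where
  posSemidef_apply {X : Matrix ι ι 𝕜} : X.PosSemidef → (T X).PosSemidef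
  map_one : T 1 = 1
  trace_apply (X : Matrix ι ι 𝕜) : (T X).trace = X.trace

def schurMatrix (T : Matrix ι ι 𝕜 →ₗ[𝕜] Matrix ι ι 𝕜)
    (v w : OrthonormalBasis ι 𝕜 (EuclideanSpace 𝕜 ι)) : Matrix ι ι ℝ :=
  of fun k l => RCLike.re (star ⇑(v k) ⬝ᵥ T (vecMulVec ⇑(w l) (star ⇑(w l))) *ᵥ ⇑(v k))

lemma schurMatrix_mulVec_eigenvalues (T : Matrix ι ι 𝕜 →ₗ[𝕜] Matrix ι ι 𝕜) {A : Matrix ι ι 𝕜}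
    (hA : A.IsHermitian) (hTA : (T A).IsHermitian) :
    schurMatrix T hTA.eigenvectorBasis hA.eigenvectorBasis *ᵥ hA.eigenvalues = hTA.eigenvalues := by
  have hTA_sum : T A = ∑ l, (hA.eigenvalues l : 𝕜) •
      T (vecMulVec ⇑(hA.eigenvectorBasis l) (star ⇑(hA.eigenvectorBasis l))) := by
    simpa only [map_sum, map_smul] using congrArg T hA.eq_sum_eigenvalues_smul_vecMulVec
  ext k
  rw [hTA.eigenvalues_eq]
  generalize hTA.eigenvectorBasis = v
  rw [hTA_sum]
  simp only [Matrix.sum_mulVec, Matrix.smul_mulVec, dotProduct_sum, dotProduct_smul,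
    map_sum, smul_eq_mul, RCLike.re_ofReal_mul]
  exact Finset.sum_congr rfl fun l _ => mul_comm _ _

namespace IsDoublyStochasticMap
variable {T : Matrix ι ι 𝕜 →ₗ[𝕜] Matrix ι ι 𝕜}

lemma schurMatrix_mem_doublyStochastic (hT : IsDoublyStochasticMap T)
    (v w : OrthonormalBasis ι 𝕜 (EuclideanSpace 𝕜 ι)) :
    schurMatrix T v w ∈ doublyStochastic ℝ ι := by
  refine mem_doublyStochastic_iff_sum.mpr ⟨fun k l => ?_, fun k => ?_, fun l => ?_⟩
  · exact RCLike.nonneg_iff.mp ((hT.posSemidef_apply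
      (posSemidef_vecMulVec_self_star _)).dotProduct_mulVec_nonneg _) |>.1
  · simp only [schurMatrix, of_apply, ← map_sum, ← dotProduct_sum, ← Matrix.sum_mulVec,
      w.sum_vecMulVec_self_star, hT.map_one, one_mulVec, v.star_dotProduct_self, RCLike.one_re]
  · simp only [schurMatrix, of_apply, ← map_sum, v.sum_star_dotProduct_mulVec, hT.trace_apply,
      trace_vecMulVec]
    rw [dotProduct_comm, w.star_dotProduct_self, RCLike.one_re]

theorem eigenvalues_majorizedBy (hT : IsDoublyStochasticMap T) {A : Matrix ι ι 𝕜}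
    (hA : A.IsHermitian) (hTA : (T A).IsHermitian) :
    MajorizedBy hTA.eigenvalues hA.eigenvalues := by
  rw [← schurMatrix_mulVec_eigenvalues T hA hTA]
  exact majorizedBy_mulVec_of_mem_doublyStochastic (hT.schurMatrix_mem_doublyStochastic _ _) _

end IsDoublyStochasticMap

def schurMultiplier (Φ : Matrix ι ι 𝕜) : Matrix ι ι 𝕜 →ₗ[𝕜] Matrix ι ι 𝕜 where
  toFun X := X ⊙ Φ
  map_add' _ _ := add_hadamard _ _ _
  map_smul' _ _ := smul_hadamard _ _ _

lemma isDoublyStochasticMap_schurMultiplier {Φ : Matrix ι ι 𝕜} (hΦ : Φ.PosSemidef)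
    (hd : ∀ i, Φ i i = 1) : IsDoublyStochasticMap (schurMultiplier Φ) where
  posSemidef_apply hX := hX.hadamard hΦ
  map_one := one_hadamard_eq_one_iff.mpr (funext hd)
  trace_apply X := by simp [schurMultiplier, trace, hadamard_apply, hd]

end Matrix

/-- **Eigenvalue majorization under Hadamard products with correlation matrices**
(Corollary to Schur's theorem on doubly stochastic maps): for `A` Hermitian and
`Φ` a correlation matrix, the eigenvalues of `A ∘ Φ` are majorized by those of `A`. -/
theorem eigenvalues_hadamard_majorized
    (n : ℕ)
    (A Φ : Matrix (Fin n) (Fin n) ℂ)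
    (hA : A.IsHermitian)
    (hΦ : Φ.PosSemidef) (hd : ∀ i, Φ i i = 1) :
    MajorizedBy (hadamard_isHermitian hA hΦ.1).eigenvalues hA.eigenvalues :=
  (Matrix.isDoublyStochasticMap_schurMultiplier hΦ hd).eigenvalues_majorizedBy hA _

end
end

section
/- For n ≥ 1 and real numbers ρ₁, ρ₂ with 0 ≤ ρ₁ ≤ ρ₂, the vector of eigenvalues of the n×n tridiagonal correlation matrix T_n(ρ₁) is majorized by the vector of eigenvalues of T_n(ρ₂). -/
open Matrix

noncomputable section

/-- The `n × n` tridiagonal correlation matrix `T_n(ρ)`: ones on the diagonal,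
`ρ` on the first sub- and super-diagonals, zero elsewhere. -/
def triCorr (n : ℕ) (ρ : ℝ) : Matrix (Fin n) (Fin n) ℝ :=
  Matrix.of fun i j =>
    if i = j then 1 else if ((i : ℤ) - (j : ℤ)).natAbs = 1 then ρ else 0

lemma triCorr_isHermitian (n : ℕ) (ρ : ℝ) : (triCorr n ρ).IsHermitian := by
  ext i j
  have h : ((j : ℤ) - (i : ℤ)).natAbs = ((i : ℤ) - (j : ℤ)).natAbs := by
    rw [← Int.natAbs_neg, neg_sub]
  by_cases hij : i = j <;>
    simp [triCorr, Matrix.conjTranspose_apply, h, hij, eq_comm]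


section TriAuxSec
open Polynomial
namespace TriAux


/-! ### Multiset lemmas -/

lemma exists_le_of_le_map {α β : Type*} {f : α → β} :
    ∀ {t : Multiset β} {s : Multiset α}, t ≤ s.map f → ∃ u ≤ s, t = u.map f := by
  haveI := Classical.decEq α
  intro t
  induction t using Multiset.induction_on with
  | empty => exact fun {s} _ => ⟨0, Multiset.zero_le s, rfl⟩
  | cons a t ih =>
    intro s h
    have ha : a ∈ s.map f := Multiset.mem_of_le h (Multiset.mem_cons_self a t)
    obtain ⟨x, hx, hfx⟩ := Multiset.mem_map.mp ha
    have hs : s.map f = a ::ₘ (s.erase x).map f := by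
      conv_lhs => rw [← Multiset.cons_erase hx]
      rw [Multiset.map_cons, hfx]
    rw [hs, Multiset.cons_le_cons_iff] at h
    obtain ⟨u, hu, rfl⟩ := ih h
    refine ⟨x ::ₘ u, ?_, by rw [Multiset.map_cons, hfx]⟩
    calc x ::ₘ u ≤ x ::ₘ s.erase x := Multiset.cons_le_cons _ hu
      _ = s := Multiset.cons_erase hx

lemma sum_map_affine (c t : ℝ) (u : Multiset ℝ) :
    (u.map (fun x => c + t * x)).sum = u.card * c + t * u.sum := by
  induction u using Multiset.induction_on with
  | empty => simp
  | cons a u ih =>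
    simp only [Multiset.map_cons, Multiset.sum_cons, ih, Multiset.card_cons]
    push_cast; ring

lemma sum_map_neg (u : Multiset ℝ) : (u.map (fun x => -x)).sum = -u.sum := by
  induction u using Multiset.induction_on with
  | empty => simp
  | cons a u ih => simp [ih]; ring

/-! ### sumKLargest via multisets -/

def mSet (M : Multiset ℝ) (k : ℕ) : Set ℝ := {x | ∃ t ∈ M.powersetCard k, x = t.sum}

lemma mSet_eq (M : Multiset ℝ) (k : ℕ) :
    mSet M k = ↑(((M.powersetCard k).toFinset).image Multiset.sum) := by
  ext x
  simp [mSet, eq_comm]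

lemma le_msum {M : Multiset ℝ} {k : ℕ} {x : ℝ} (hx : x ∈ mSet M k) :
    x ≤ sSup (mSet M k) := by
  rw [mSet_eq] at hx ⊢
  exact le_csSup (Finset.bddAbove _) hx

lemma msum_mem {M : Multiset ℝ} {k : ℕ} (hk : k ≤ Multiset.card M) :
    sSup (mSet M k) ∈ mSet M k := by
  have hne : (((M.powersetCard k).toFinset).image Multiset.sum).Nonempty := by
    have hpos : 0 < Multiset.card (M.powersetCard k) := by
      rw [Multiset.card_powersetCard]
      exact Nat.choose_pos hk
    obtain ⟨t, ht⟩ := Multiset.card_pos_iff_exists_mem.mp hpos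
    exact ⟨t.sum, Finset.mem_image.mpr ⟨t, Multiset.mem_toFinset.mpr ht, rfl⟩⟩
  rw [mSet_eq, hne.csSup_eq_max']
  exact Finset.max'_mem _ _


/-! ### charpoly lemmas -/

lemma charpoly_conj {m : Type*} [Fintype m] [DecidableEq m] (U B V : Matrix m m ℝ)
    (hUV : U * V = 1) (hVU : V * U = 1) :
    (U * B * V).charpoly = B.charpoly := by
  have hkey : charmatrix (U * B * V) =
      U.map Polynomial.C * charmatrix B * V.map Polynomial.C := by
    have hmapUV : U.map Polynomial.C * V.map Polynomial.C = 1 := by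
      rw [← Matrix.map_mul, hUV, Matrix.map_one _ (map_zero _) (map_one _)]
    rw [charmatrix, charmatrix]
    rw [Matrix.scalar_apply, ← Matrix.smul_one_eq_diagonal]
    simp only [RingHom.mapMatrix_apply]
    rw [mul_sub, sub_mul, Matrix.mul_smul, Matrix.smul_mul, mul_one,
      Matrix.map_mul, Matrix.map_mul, hmapUV]
  rw [Matrix.charpoly, Matrix.charpoly, hkey, det_mul, det_mul]
  have h1 : (U.map Polynomial.C).det * (V.map Polynomial.C).det = 1 := by
    rw [← RingHom.mapMatrix_apply, ← RingHom.mapMatrix_apply, ← RingHom.map_det,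
      ← RingHom.map_det, ← _root_.map_mul, ← det_mul, hUV, det_one, _root_.map_one]
  calc (U.map Polynomial.C).det * (charmatrix B).det * (V.map Polynomial.C).det
      = (U.map Polynomial.C).det * (V.map Polynomial.C).det * (charmatrix B).det := by ring
    _ = (charmatrix B).det := by rw [h1, one_mul]

lemma charpoly_diagonal {m : Type*} [Fintype m] [DecidableEq m] (d : m → ℝ) :
    (diagonal d).charpoly
      = (Finset.univ.val.map (fun i => (X : ℝ[X]) - Polynomial.C (d i))).prod := by
  have hcm : charmatrix (diagonal d) = diagonal (fun i => (X : ℝ[X]) - Polynomial.C (d i)) := by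
    ext i j
    by_cases h : i = j
    · subst h; simp [charmatrix_apply]
    · simp [charmatrix_apply, diagonal_apply_ne _ h]
  rw [Matrix.charpoly, hcm, det_diagonal, Finset.prod_eq_multiset_prod]

lemma roots_charpoly_of_diag {m : Type*} [Fintype m] [DecidableEq m]
    (U V : Matrix m m ℝ) (hUV : U * V = 1) (hVU : V * U = 1) (d : m → ℝ)
    {A : Matrix m m ℝ} (hA : A = U * diagonal d * V) :
    A.charpoly.roots = Finset.univ.val.map d := by
  rw [hA, charpoly_conj _ _ _ hUV hVU, charpoly_diagonal]
  rw [show (Finset.univ.val.map (fun i => (X : ℝ[X]) - Polynomial.C (d i)))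
      = ((Finset.univ.val.map d).map (fun x => (X : ℝ[X]) - Polynomial.C x)) by
    rw [Multiset.map_map]; rfl]
  exact roots_multiset_prod_X_sub_C _


variable {n : ℕ}

/-- The tridiagonal matrix with zero diagonal and ones on the off-diagonals. -/
def T0 (n : ℕ) : Matrix (Fin n) (Fin n) ℝ :=
  Matrix.of fun i j =>
    if i = j then 0 else if ((i : ℤ) - (j : ℤ)).natAbs = 1 then 1 else 0

lemma T0_isHermitian (n : ℕ) : (T0 n).IsHermitian := by
  ext i j
  have h : ((j : ℤ) - (i : ℤ)).natAbs = ((i : ℤ) - (j : ℤ)).natAbs := by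
    rw [← Int.natAbs_neg, neg_sub]
  by_cases hij : i = j <;>
    simp [T0, Matrix.conjTranspose_apply, h, hij, eq_comm]

lemma triCorr_eq (n : ℕ) (ρ : ℝ) : triCorr n ρ = 1 + ρ • T0 n := by
  ext i j
  by_cases hij : i = j
  · subst hij; simp [triCorr, T0, Matrix.one_apply]
  · by_cases h1 : ((i : ℤ) - (j : ℤ)).natAbs = 1 <;>
      simp [triCorr, T0, Matrix.one_apply, hij, h1]

/-- the multiset of eigenvalues of `T0 n` -/
def Mμ (n : ℕ) : Multiset ℝ := Finset.univ.val.map (T0_isHermitian n).eigenvalues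

lemma card_Mμ : Multiset.card (Mμ n) = n := by simp [Mμ]

def Uu (n : ℕ) : Matrix (Fin n) (Fin n) ℝ :=
  ((T0_isHermitian n).eigenvectorUnitary : Matrix (Fin n) (Fin n) ℝ)

lemma hUV : Uu n * star (Uu n) = 1 :=
  (Matrix.mem_unitaryGroup_iff).mp ((T0_isHermitian n).eigenvectorUnitary).2

lemma hVU : star (Uu n) * Uu n = 1 :=
  (Matrix.mem_unitaryGroup_iff').mp ((T0_isHermitian n).eigenvectorUnitary).2

lemma T0_spectral :
    T0 n = Uu n * diagonal ((T0_isHermitian n).eigenvalues) * star (Uu n) := by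
  have h := (T0_isHermitian n).spectral_theorem
  rwa [RCLike.ofReal_real_eq_id, Function.id_comp] at h

lemma roots_triCorr (ρ : ℝ) :
    (triCorr n ρ).charpoly.roots = (Mμ n).map (fun x => 1 + ρ * x) := by
  have hd : triCorr n ρ
      = Uu n * diagonal (fun i => 1 + ρ * (T0_isHermitian n).eigenvalues i) * star (Uu n) := by
    have : diagonal (fun i => 1 + ρ * (T0_isHermitian n).eigenvalues i)
        = 1 + ρ • diagonal ((T0_isHermitian n).eigenvalues) := by
      rw [← diagonal_one, ← diagonal_smul, ← diagonal_add]
      rfl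
    rw [this, mul_add, add_mul, mul_one, hUV, Matrix.mul_smul, Matrix.smul_mul, ← T0_spectral,
      triCorr_eq]
  rw [roots_charpoly_of_diag _ _ hUV hVU _ hd, Mμ, Multiset.map_map]
  rfl

lemma roots_triCorr' (ρ : ℝ) :
    Finset.univ.val.map (triCorr_isHermitian n ρ).eigenvalues
      = (Mμ n).map (fun x => 1 + ρ * x) := by
  rw [← roots_triCorr ρ]
  have h := (triCorr_isHermitian n ρ).spectral_theorem
  rw [RCLike.ofReal_real_eq_id, Function.id_comp] at h
  exact (roots_charpoly_of_diag _ _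
    ((Matrix.mem_unitaryGroup_iff).mp ((triCorr_isHermitian n ρ).eigenvectorUnitary).2)
    ((Matrix.mem_unitaryGroup_iff').mp ((triCorr_isHermitian n ρ).eigenvectorUnitary).2)
    _ h).symm

/-- the diagonal sign matrix -/
def D (n : ℕ) : Matrix (Fin n) (Fin n) ℝ := diagonal (fun i => (-1 : ℝ) ^ (i : ℕ))

lemma D_mul_D : D n * D n = 1 := by
  rw [D, diagonal_mul_diagonal]
  convert diagonal_one
  rw [← pow_add]
  exact Even.neg_one_pow ⟨_, rfl⟩

lemma D_conj : D n * T0 n * D n = - T0 n := by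
  ext i j
  rw [D, Matrix.neg_apply, Matrix.mul_diagonal, Matrix.diagonal_mul]
  by_cases hij : i = j
  · subst hij; simp [T0]
  · by_cases h1 : ((i : ℤ) - (j : ℤ)).natAbs = 1
    · have hodd : Odd ((i : ℕ) + (j : ℕ)) := by
        rcases Int.natAbs_eq_iff.mp h1 with h | h
        · have : (i : ℕ) = (j : ℕ) + 1 := by omega
          rw [this]; exact ⟨j, by ring⟩
        · have : (j : ℕ) = (i : ℕ) + 1 := by omega
          rw [this]; exact ⟨i, by ring⟩
      have : (-1 : ℝ) ^ (i : ℕ) * (-1 : ℝ) ^ (j : ℕ) = -1 := by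
        rw [← pow_add]; exact Odd.neg_one_pow hodd
      simp only [T0, Matrix.of_apply, if_neg hij, if_pos h1]
      calc (-1 : ℝ) ^ (i : ℕ) * 1 * (-1 : ℝ) ^ (j : ℕ)
          = (-1 : ℝ) ^ (i : ℕ) * (-1 : ℝ) ^ (j : ℕ) := by ring
        _ = -1 := this
    · simp [T0, hij, h1]

lemma Mμ_symm : (Mμ n).map (fun x => -x) = Mμ n := by
  have hneg : - T0 n
      = Uu n * diagonal (fun i => -(T0_isHermitian n).eigenvalues i) * star (Uu n) := by
    have : diagonal (fun i => -(T0_isHermitian n).eigenvalues i)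
        = - diagonal ((T0_isHermitian n).eigenvalues) := by
      ext i j
      by_cases h : i = j
      · subst h; simp
      · simp [diagonal_apply_ne _ h]
    rw [this, Matrix.mul_neg, Matrix.neg_mul, ← T0_spectral]
  have h1 : (- T0 n).charpoly.roots
      = Finset.univ.val.map (fun i => -(T0_isHermitian n).eigenvalues i) :=
    roots_charpoly_of_diag _ _ hUV hVU _ hneg
  have h2 : (- T0 n).charpoly.roots = Mμ n := by
    rw [← D_conj, charpoly_conj _ _ _ D_mul_D D_mul_D]
    exact roots_charpoly_of_diag _ _ hUV hVU _ T0_spectral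
  have h3 : Finset.univ.val.map (fun i => -(T0_isHermitian n).eigenvalues i) = Mμ n := by
    rw [← h1, h2]
  rw [← h3, Multiset.map_map]
  have hc : ((fun x : ℝ => -x) ∘ fun i => -(T0_isHermitian n).eigenvalues i)
      = (T0_isHermitian n).eigenvalues := by
    funext i; simp
  rw [hc]
  exact h3.symm

lemma Mμ_sum : (Mμ n).sum = 0 := by
  have h := congrArg Multiset.sum (Mμ_symm (n := n))
  rw [sum_map_neg] at h
  linarith

lemma sumKLargest_eq {ι : Type*} [Fintype ι] [DecidableEq ι] (a : ι → ℝ) (k : ℕ) :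
    sumKLargest a k = sSup (mSet (Finset.univ.val.map a) k) := by
  apply congrArg sSup
  ext x
  constructor
  · rintro ⟨s, hs, rfl⟩
    refine ⟨s.val.map a, Multiset.mem_powersetCard.mpr ⟨Multiset.map_le_map ?_, by simp [hs]⟩,
      Finset.sum_eq_multiset_sum _ _⟩
    exact Finset.val_le_iff.mpr (Finset.subset_univ s)
  · rintro ⟨t, ht, rfl⟩
    rw [Multiset.mem_powersetCard] at ht
    obtain ⟨u, hu, rfl⟩ := exists_le_of_le_map ht.1
    have hnd : u.Nodup := Multiset.nodup_of_le hu Finset.univ.nodup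
    exact ⟨⟨u, hnd⟩, by simpa using ht.2, (Finset.sum_eq_multiset_sum ⟨u, hnd⟩ a).symm⟩

lemma msum_affine (M : Multiset ℝ) (k : ℕ) (hk : k ≤ Multiset.card M) (c t : ℝ) (ht : 0 ≤ t) :
    sSup (mSet (M.map fun x => c + t * x) k) = k * c + t * sSup (mSet M k) := by
  have hk' : k ≤ Multiset.card (M.map fun x => c + t * x) := by simpa using hk
  apply le_antisymm
  · obtain ⟨t₀, ht₀, heq⟩ := msum_mem hk'
    rw [heq]
    rw [Multiset.mem_powersetCard] at ht₀
    obtain ⟨u, hu, rfl⟩ := exists_le_of_le_map ht₀.1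
    have hcard : Multiset.card u = k := by simpa using ht₀.2
    rw [sum_map_affine, hcard]
    have h1 : u.sum ≤ sSup (mSet M k) :=
      le_msum ⟨u, Multiset.mem_powersetCard.mpr ⟨hu, hcard⟩, rfl⟩
    have := mul_le_mul_of_nonneg_left h1 ht
    linarith
  · obtain ⟨u₀, hu₀, heq⟩ := msum_mem hk
    rw [Multiset.mem_powersetCard] at hu₀
    have h1 : ((u₀.map fun x => c + t * x)).sum ≤ sSup (mSet (M.map fun x => c + t * x) k) :=
      le_msum ⟨_, Multiset.mem_powersetCard.mpr ⟨Multiset.map_le_map hu₀.1, by simp [hu₀.2]⟩, rfl⟩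
    rw [sum_map_affine, hu₀.2, ← heq] at h1
    exact h1

lemma msum_nonneg (M : Multiset ℝ) (k : ℕ) (hk : k ≤ Multiset.card M)
    (hsym : M.map (fun x => -x) = M) : 0 ≤ sSup (mSet M k) := by
  obtain ⟨t₀, ht₀, heq⟩ := msum_mem hk
  rw [Multiset.mem_powersetCard] at ht₀
  have h2 : (t₀.map fun x => -x).sum ≤ sSup (mSet M k) := by
    refine le_msum ⟨_, Multiset.mem_powersetCard.mpr ⟨?_, by simp [ht₀.2]⟩, rfl⟩
    rw [← hsym]
    exact Multiset.map_le_map ht₀.1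
  rw [sum_map_neg, heq] at h2
  rw [heq]
  linarith

end TriAux
end TriAuxSec

/-- **Eigenvalue majorization for tridiagonal correlation matrices**:
for `0 ≤ ρ₁ ≤ ρ₂`, the eigenvalues of `T_n(ρ₁)` are majorized by those of
`T_n(ρ₂)`. -/
theorem triCorr_eigenvalues_majorized
    (n : ℕ) (hn : 1 ≤ n) (ρ₁ ρ₂ : ℝ) (h0 : 0 ≤ ρ₁) (h12 : ρ₁ ≤ ρ₂) :
    MajorizedBy (triCorr_isHermitian n ρ₁).eigenvalues
      (triCorr_isHermitian n ρ₂).eigenvalues := by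
  have hρ2 : (0 : ℝ) ≤ ρ₂ := le_trans h0 h12
  constructor
  · intro k hk
    rw [Fintype.card_fin] at hk
    have hk' : k ≤ Multiset.card (TriAux.Mμ n) := by rwa [TriAux.card_Mμ]
    have hS : 0 ≤ sSup (TriAux.mSet (TriAux.Mμ n) k) :=
      TriAux.msum_nonneg _ _ hk' TriAux.Mμ_symm
    rw [TriAux.sumKLargest_eq, TriAux.sumKLargest_eq, TriAux.roots_triCorr',
      TriAux.roots_triCorr', TriAux.msum_affine _ _ hk' 1 ρ₁ h0,
      TriAux.msum_affine _ _ hk' 1 ρ₂ hρ2]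
    have := mul_le_mul_of_nonneg_right h12 hS
    linarith
  · rw [Finset.sum_eq_multiset_sum, Finset.sum_eq_multiset_sum, TriAux.roots_triCorr',
      TriAux.roots_triCorr', TriAux.sum_map_affine, TriAux.sum_map_affine,
      TriAux.Mμ_sum, TriAux.card_Mμ]
    ring

end
end

section
/- For a spatial correlation environment T = (Φ_T, Φ_S, Φ_R) consisting of correlation matrices Φ_T (n_T×n_T), Φ_S (n_S×n_S), Φ_R (n_R×n_R), define J(T) = (Φ_T⊗Φ_R)/(n_T·n_R) ⊕ (Φ_T⊗Φ_S)/(n_T·n_S) ⊕ (Φ_S⊗Φ_R)/(n_S·n_R) and κ(T) = c(Φ_T)·c(Φ_R) + c(Φ_T)·c(Φ_S) + c(Φ_R)·c(Φ_S) + 1, where c is the correlation figure. If T₁ = (Φ_T, Φ_S, Φ_R) and T₂ = (Φ'_T, Φ'_S, Φ'_R) are two environments with the same dimensions n_T, n_S, n_R and the vector of eigenvalues of J(T₁) is majorized by the vector of eigenvalues of J(T₂), then κ(T₁) ≤ κ(T₂). (The kurtosis of the Frobenius norm of the double-scattering channel matrix is monotonically increasing in the sense of Schur as a functional of the eigenvalues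 of J(T).) -/
open Matrix
open scoped ComplexOrder

noncomputable section

open scoped Kronecker

/-- The matrix `J(T) = (Φ_T⊗Φ_R)/(n_T n_R) ⊕ (Φ_T⊗Φ_S)/(n_T n_S) ⊕ (Φ_S⊗Φ_R)/(n_S n_R)`
associated to a spatial correlation environment `T = (Φ_T, Φ_S, Φ_R)`. -/
def envJ {nT nS nR : ℕ}
    (ΦT : Matrix (Fin nT) (Fin nT) ℂ) (ΦS : Matrix (Fin nS) (Fin nS) ℂ)
    (ΦR : Matrix (Fin nR) (Fin nR) ℂ) :
    Matrix ((Fin nT × Fin nR) ⊕ ((Fin nT × Fin nS) ⊕ (Fin nS × Fin nR)))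
      ((Fin nT × Fin nR) ⊕ ((Fin nT × Fin nS) ⊕ (Fin nS × Fin nR))) ℂ :=
  Matrix.fromBlocks (((nT : ℂ) * nR)⁻¹ • (ΦT ⊗ₖ ΦR)) 0 0
    (Matrix.fromBlocks (((nT : ℂ) * nS)⁻¹ • (ΦT ⊗ₖ ΦS)) 0 0
      (((nS : ℂ) * nR)⁻¹ • (ΦS ⊗ₖ ΦR)))

/-- The kurtosis functional
`κ(T) = ζ(Φ_T)ζ(Φ_R) + ζ(Φ_T)ζ(Φ_S) + ζ(Φ_R)ζ(Φ_S) + 1`. -/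
def envKurt {nT nS nR : ℕ}
    (ΦT : Matrix (Fin nT) (Fin nT) ℂ) (ΦS : Matrix (Fin nS) (Fin nS) ℂ)
    (ΦR : Matrix (Fin nR) (Fin nR) ℂ) : ℝ :=
  corrFig ΦT * corrFig ΦR + corrFig ΦT * corrFig ΦS
    + corrFig ΦR * corrFig ΦS + 1

lemma sumKLargest_comp_equiv {ι ι' : Type*} [Fintype ι] [Fintype ι'] (a : ι → ℝ) (e : ι' ≃ ι)
    (k : ℕ) : sumKLargest (a ∘ e) k = sumKLargest a k := by
  unfold sumKLargest
  congr 1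
  ext x
  constructor
  · rintro ⟨s, hs, rfl⟩
    exact ⟨s.map e.toEmbedding, by simp [hs], by rw [Finset.sum_map]; rfl⟩
  · rintro ⟨s, hs, rfl⟩
    refine ⟨s.map e.symm.toEmbedding, by simp [hs], ?_⟩
    rw [Finset.sum_map]
    simp

lemma strictMono_nat_val_le {k : ℕ} {ψ : Fin k → ℕ} (h : StrictMono ψ) (j : Fin k) :
    (j : ℕ) ≤ ψ j := by
  have key : ∀ m : ℕ, ∀ j : Fin k, (j : ℕ) = m → m ≤ ψ j := by
    intro m
    induction m with
    | zero => intro j _; exact Nat.zero_le _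
    | succ p ih =>
      intro j hj
      have hp : p < k := by omega
      have h1 := ih ⟨p, hp⟩ rfl
      have h2 : ψ ⟨p, hp⟩ < ψ j := h (by simp [Fin.lt_def]; omega)
      omega
  exact key _ j rfl

lemma sumKLargest_antitone {N : ℕ} (a : Fin N → ℝ) (ha : Antitone a) {k : ℕ} (hk : k ≤ N) :
    sumKLargest a k = ∑ j : Fin k, a (Fin.castLE hk j) := by
  apply IsGreatest.csSup_eq
  constructor
  · exact ⟨Finset.univ.map (Fin.castLEEmb hk), by simp, by rw [Finset.sum_map]; rfl⟩
  · rintro x ⟨s, hs, rfl⟩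
    have hmap : Finset.univ.map (s.orderEmbOfFin hs).toEmbedding = s := by
      ext i
      simp only [Finset.mem_map, Finset.mem_univ, true_and, RelEmbedding.coe_toEmbedding]
      constructor
      · rintro ⟨j, rfl⟩; exact Finset.orderEmbOfFin_mem s hs j
      · intro hi
        have := Finset.range_orderEmbOfFin s hs
        have : i ∈ Set.range (s.orderEmbOfFin hs) := this ▸ hi
        obtain ⟨j, hj⟩ := this
        exact ⟨j, hj⟩
    calc ∑ i ∈ s, a i = ∑ j : Fin k, a (s.orderEmbOfFin hs j) := by
          rw [show (∑ i ∈ s, a i)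
              = ∑ i ∈ Finset.univ.map (s.orderEmbOfFin hs).toEmbedding, a i by rw [hmap],
            Finset.sum_map]
          rfl
      _ ≤ ∑ j : Fin k, a (Fin.castLE hk j) := by
          apply Finset.sum_le_sum
          intro j _
          apply ha
          rw [Fin.le_def]
          exact strictMono_nat_val_le
            (fun x y hxy => (s.orderEmbOfFin hs).strictMono hxy) j

lemma abel_nonneg (N : ℕ) (f g : ℕ → ℝ) (hf : ∀ i, i + 1 < N → f (i + 1) ≤ f i)
    (hD : ∀ k, k ≤ N → 0 ≤ ∑ i ∈ Finset.range k, g i)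
    (hDN : ∑ i ∈ Finset.range N, g i = 0) :
    0 ≤ ∑ i ∈ Finset.range N, f i * g i := by
  have key := Finset.sum_range_by_parts f g N
  simp only [smul_eq_mul, hDN, mul_zero, zero_sub] at key
  rw [key, ← Finset.sum_neg_distrib]
  apply Finset.sum_nonneg
  intro i hi
  rw [Finset.mem_range] at hi
  have h1 : f (i + 1) ≤ f i := hf i (by omega)
  have h2 : 0 ≤ ∑ j ∈ Finset.range (i + 1), g j := hD (i + 1) (by omega)
  nlinarith

lemma majorized_sum_sq {ι ι' : Type*} [Fintype ι] [Fintype ι'] (a : ι → ℝ) (b : ι' → ℝ)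
    (hcard : Fintype.card ι = Fintype.card ι')
    (h : MajorizedBy a b) : ∑ i, (a i) ^ 2 ≤ ∑ i, (b i) ^ 2 := by
  classical
  set N := Fintype.card ι with hN
  -- sorted decreasing rearrangements
  obtain ⟨ea⟩ : Nonempty (Fin N ≃ ι) := ⟨(Fintype.equivFin ι).symm⟩
  obtain ⟨eb⟩ : Nonempty (Fin N ≃ ι') := ⟨(Fintype.equivFinOfCardEq hcard.symm).symm⟩
  set σa := Tuple.sort (a ∘ ea) with hσa
  set σb := Tuple.sort (b ∘ eb) with hσb
  set ea' : Fin N ≃ ι := (Fin.revPerm.trans σa).trans ea with hea'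
  set eb' : Fin N ≃ ι' := (Fin.revPerm.trans σb).trans eb with heb'
  set a' : Fin N → ℝ := a ∘ ea' with ha'
  set b' : Fin N → ℝ := b ∘ eb' with hb'
  have haa : Antitone a' := by
    intro i j hij
    exact Tuple.monotone_sort (a ∘ ea) (Fin.rev_le_rev.mpr hij)
  have hbb : Antitone b' := by
    intro i j hij
    exact Tuple.monotone_sort (b ∘ eb) (Fin.rev_le_rev.mpr hij)
  -- partial sum comparison
  have hpart : ∀ k (hk : k ≤ N), ∑ j : Fin k, a' (Fin.castLE hk j) ≤
      ∑ j : Fin k, b' (Fin.castLE hk j) := by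
    intro k hk
    have h1 : sumKLargest a' k = ∑ j : Fin k, a' (Fin.castLE hk j) :=
      sumKLargest_antitone a' haa hk
    have h2 : sumKLargest b' k = ∑ j : Fin k, b' (Fin.castLE hk j) :=
      sumKLargest_antitone b' hbb hk
    have h3 : sumKLargest a' k ≤ sumKLargest b' k := by
      rw [ha', hb', sumKLargest_comp_equiv a ea' k, sumKLargest_comp_equiv b eb' k]
      exact h.1 k hk
    linarith
  have htot : ∑ i, a' i = ∑ i, b' i := by
    rw [ha', hb']
    simp only [Function.comp_apply]
    rw [Equiv.sum_comp ea' a, Equiv.sum_comp eb' b]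
    exact h.2
  -- reduce goal to sorted vectors
  have hga : ∑ i, (a i) ^ 2 = ∑ i : Fin N, (a' i) ^ 2 := by
    rw [ha']
    simp only [Function.comp_apply]
    rw [Equiv.sum_comp ea' (fun x => (a x) ^ 2)]
  have hgb : ∑ i, (b i) ^ 2 = ∑ i : Fin N, (b' i) ^ 2 := by
    rw [hb']
    simp only [Function.comp_apply]
    rw [Equiv.sum_comp eb' (fun x => (b x) ^ 2)]
  set f : ℕ → ℝ := fun i => if h : i < N then a' ⟨i, h⟩ else 0 with hfdef
  set g : ℕ → ℝ := fun i => (if h : i < N then b' ⟨i, h⟩ else 0) - f i with hgdef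
  have hsum : ∀ k (hk : k ≤ N), ∑ i ∈ Finset.range k, g i =
      (∑ j : Fin k, b' (Fin.castLE hk j)) - ∑ j : Fin k, a' (Fin.castLE hk j) := by
    intro k hk
    rw [← Fin.sum_univ_eq_sum_range, ← Finset.sum_sub_distrib]
    apply Finset.sum_congr rfl
    intro j _
    have hj : (j : ℕ) < N := lt_of_lt_of_le j.2 hk
    simp only [hgdef, hfdef, dif_pos hj]
    rfl
  have hf : ∀ i, i + 1 < N → f (i + 1) ≤ f i := by
    intro i hi
    have hi' : i < N := by omega
    simp only [hfdef, dif_pos hi, dif_pos hi']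
    exact haa (by simp [Fin.le_def])
  have hD : ∀ k, k ≤ N → 0 ≤ ∑ i ∈ Finset.range k, g i := by
    intro k hk
    rw [hsum k hk]
    linarith [hpart k hk]
  have hDN : ∑ i ∈ Finset.range N, g i = 0 := by
    rw [hsum N le_rfl]
    have h1 : ∑ j : Fin N, b' (Fin.castLE le_rfl j) = ∑ j, b' j := by
      apply Finset.sum_congr rfl; intro j _; congr 1
    have h2 : ∑ j : Fin N, a' (Fin.castLE le_rfl j) = ∑ j, a' j := by
      apply Finset.sum_congr rfl; intro j _; congr 1
    rw [h1, h2, htot]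
    ring
  have habel := abel_nonneg N f g hf hD hDN
  have hconv : ∑ i ∈ Finset.range N, f i * g i =
      ∑ i : Fin N, a' i * (b' i - a' i) := by
    rw [← Fin.sum_univ_eq_sum_range]
    apply Finset.sum_congr rfl
    intro j _
    simp only [hgdef, hfdef, dif_pos j.2]
  rw [hconv] at habel
  have hkey : ∑ i : Fin N, (a' i) ^ 2 ≤ ∑ i : Fin N, a' i * b' i := by
    have := Finset.sum_sub_distrib (s := (Finset.univ : Finset (Fin N)))
      (f := fun i => a' i * b' i) (g := fun i => a' i * a' i)
    have hexp : ∑ i : Fin N, a' i * (b' i - a' i)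
        = ∑ i : Fin N, a' i * b' i - ∑ i : Fin N, (a' i) ^ 2 := by
      rw [← Finset.sum_sub_distrib]
      apply Finset.sum_congr rfl
      intro i _
      ring
    rw [hexp] at habel
    linarith
  have hcs := Finset.sum_mul_sq_le_sq_mul_sq (Finset.univ : Finset (Fin N)) a' b'
  have hA : 0 ≤ ∑ i : Fin N, (a' i) ^ 2 := Finset.sum_nonneg fun i _ => sq_nonneg _
  have hB : 0 ≤ ∑ i : Fin N, (b' i) ^ 2 := Finset.sum_nonneg fun i _ => sq_nonneg _
  rw [hga, hgb]
  nlinarith [hkey, hcs, hA, hB]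

lemma trace_sq_real {n : Type*} [Fintype n] {Φ : Matrix n n ℂ} (h : Φ.IsHermitian) :
    (Matrix.trace (Φ * Φ)).im = 0 := by
  have h1 : star (Matrix.trace (Φ * Φ)) = Matrix.trace (Φ * Φ) := by
    rw [← Matrix.trace_conjTranspose, Matrix.conjTranspose_mul, h.eq]
  have := congrArg Complex.im h1
  simp only [Complex.star_def, Complex.conj_im] at this
  linarith

lemma sum_eigenvalues_sq {n : Type*} [Fintype n] [DecidableEq n] {A : Matrix n n ℂ}
    (hA : A.IsHermitian) :
    ∑ i, (hA.eigenvalues i) ^ 2 = (Matrix.trace (A * A)).re := by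
  set U : Matrix n n ℂ := (hA.eigenvectorUnitary : Matrix n n ℂ) with hU
  set D : Matrix n n ℂ := Matrix.diagonal (RCLike.ofReal ∘ hA.eigenvalues) with hD
  have hspec : A = U * D * star U := hA.spectral_theorem
  have hUU : star U * U = 1 := (Matrix.mem_unitaryGroup_iff').mp hA.eigenvectorUnitary.2
  have htr : Matrix.trace (A * A) = Matrix.trace (D * D) := by
    calc Matrix.trace (A * A) = Matrix.trace ((U * D * star U) * (U * D * star U)) := by
          rw [← hspec]
      _ = Matrix.trace (U * (D * D) * star U) := by
          rw [show (U * D * star U) * (U * D * star U) = U * (D * (star U * U) * D) * star U by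
            simp only [Matrix.mul_assoc], hUU]
          simp [Matrix.mul_assoc]
      _ = Matrix.trace (star U * (U * (D * D))) := by
          rw [Matrix.trace_mul_comm]
      _ = Matrix.trace (D * D) := by
          rw [← Matrix.mul_assoc, hUU, Matrix.one_mul]
  rw [htr, hD]
  rw [Matrix.diagonal_mul_diagonal, Matrix.trace_diagonal]
  simp only [Function.comp_apply, RCLike.ofReal_mul]
  rw [Complex.re_sum]
  apply Finset.sum_congr rfl
  intro i _
  simp [sq]

lemma trace_fromBlocks' {l m R : Type*} [Fintype l] [Fintype m] [AddCommMonoid R]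
    (A : Matrix l l R) (B : Matrix l m R) (C : Matrix m l R) (D : Matrix m m R) :
    Matrix.trace (Matrix.fromBlocks A B C D) = Matrix.trace A + Matrix.trace D := by
  simp [Matrix.trace, Fintype.sum_sum_type, Matrix.fromBlocks]

lemma smul_kron_sq {p q : ℕ} {A : Matrix (Fin p) (Fin p) ℂ} {B : Matrix (Fin q) (Fin q) ℂ}
    (hA : A.IsHermitian) (hB : B.IsHermitian) :
    (Matrix.trace ((((p : ℂ) * q)⁻¹ • (A ⊗ₖ B)) * (((p : ℂ) * q)⁻¹ • (A ⊗ₖ B)))).re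
      = corrFig A * corrFig B := by
  have hmul : (((p : ℂ) * q)⁻¹ • (A ⊗ₖ B)) * (((p : ℂ) * q)⁻¹ • (A ⊗ₖ B))
      = (((p : ℂ) * q)⁻¹ * ((p : ℂ) * q)⁻¹) • ((A * A) ⊗ₖ (B * B)) := by
    rw [Matrix.smul_mul, Matrix.mul_smul, Matrix.mul_kronecker_mul, smul_smul]
  rw [hmul, Matrix.trace_smul, Matrix.trace_kronecker]
  have hA0 := trace_sq_real hA
  have hB0 := trace_sq_real hB
  set x : ℂ := Matrix.trace (A * A) with hx
  set y : ℂ := Matrix.trace (B * B) with hy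
  have hxx : x = ((x.re : ℝ) : ℂ) := by
    apply Complex.ext <;> simp [hA0]
  have hyy : y = ((y.re : ℝ) : ℂ) := by
    apply Complex.ext <;> simp [hB0]
  have hc : (((p : ℂ) * q)⁻¹ * ((p : ℂ) * q)⁻¹) =
      (((((p : ℝ) * q)⁻¹ * ((p : ℝ) * q)⁻¹ : ℝ)) : ℂ) := by push_cast; ring
  rw [hc, smul_eq_mul]
  rw [show x * y = (((x.re * y.re : ℝ)) : ℂ) by rw [Complex.ofReal_mul, ← hxx, ← hyy]]
  rw [← Complex.ofReal_mul, Complex.ofReal_re]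
  unfold corrFig
  rw [← hx, ← hy]
  simp only [Fintype.card_fin]
  rw [mul_inv, div_eq_mul_inv, div_eq_mul_inv, sq, sq, mul_inv, mul_inv]
  ring

lemma trace_envJ_sq {nT nS nR : ℕ}
    {ΦT : Matrix (Fin nT) (Fin nT) ℂ} {ΦS : Matrix (Fin nS) (Fin nS) ℂ}
    {ΦR : Matrix (Fin nR) (Fin nR) ℂ}
    (hT : ΦT.IsHermitian) (hS : ΦS.IsHermitian) (hR : ΦR.IsHermitian) :
    (Matrix.trace (envJ ΦT ΦS ΦR * envJ ΦT ΦS ΦR)).re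
      = corrFig ΦT * corrFig ΦR + corrFig ΦT * corrFig ΦS + corrFig ΦS * corrFig ΦR := by
  unfold envJ
  rw [Matrix.fromBlocks_multiply, Matrix.fromBlocks_multiply]
  simp only [Matrix.mul_zero, Matrix.zero_mul, add_zero, zero_add]
  rw [trace_fromBlocks', trace_fromBlocks']
  simp only [Complex.add_re]
  rw [smul_kron_sq hT hR, smul_kron_sq hT hS, smul_kron_sq hS hR]
  ring

/-- **Schur monotonicity of the kurtosis of `‖H‖_F`** (Corollary 1): if the
eigenvalues of `J(T₁)` are majorized by the eigenvalues of `J(T₂)`, then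
`κ(T₁) ≤ κ(T₂)`. -/
theorem envKurt_schur_monotone
    (nT nS nR : ℕ)
    (ΦT ΦT' : Matrix (Fin nT) (Fin nT) ℂ)
    (ΦS ΦS' : Matrix (Fin nS) (Fin nS) ℂ)
    (ΦR ΦR' : Matrix (Fin nR) (Fin nR) ℂ)
    (hΦT : ΦT.PosSemidef) (hΦS : ΦS.PosSemidef) (hΦR : ΦR.PosSemidef)
    (hΦT' : ΦT'.PosSemidef) (hΦS' : ΦS'.PosSemidef) (hΦR' : ΦR'.PosSemidef)
    (hdT : ∀ i, ΦT i i = 1) (hdS : ∀ i, ΦS i i = 1) (hdR : ∀ i, ΦR i i = 1)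
    (hdT' : ∀ i, ΦT' i i = 1) (hdS' : ∀ i, ΦS' i i = 1) (hdR' : ∀ i, ΦR' i i = 1)
    (hJ : (envJ ΦT ΦS ΦR).IsHermitian) (hJ' : (envJ ΦT' ΦS' ΦR').IsHermitian)
    (hmaj : MajorizedBy hJ.eigenvalues hJ'.eigenvalues) :
    envKurt ΦT ΦS ΦR ≤ envKurt ΦT' ΦS' ΦR' := by
  have h1 : ∑ i, (hJ.eigenvalues i) ^ 2 ≤ ∑ i, (hJ'.eigenvalues i) ^ 2 :=
    majorized_sum_sq _ _ rfl hmaj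
  rw [sum_eigenvalues_sq hJ, sum_eigenvalues_sq hJ'] at h1
  rw [trace_envJ_sq hΦT.1 hΦS.1 hΦR.1, trace_envJ_sq hΦT'.1 hΦS'.1 hΦR'.1] at h1
  unfold envKurt
  linarith

end
end

section
/- Let n ≥ 2 be an integer and ρ ∈ (0,1). Then for every real ξ such that 1 + ξ·(1+(n−1)ρ) ≠ 0 and 1 + ξ·(1−ρ) ≠ 0, the following partial-fraction identity holds: det(I_n + ξ·C_n(ρ))^{-1} = (1 + ξ·(1+(n−1)ρ))^{-1}·(1 + ξ·(1−ρ))^{-(n−1)} = X₁·(1 + ξ·(1+(n−1)ρ))^{-1} + ∑_{j=1}^{n−1} X₂,j·(1 + ξ·(1−ρ))^{-j}, where X₁ = (nρ/(1−ρ+nρ))^{−n+1} and X₂,j = −((1−ρ)/(1−ρ+nρ))·(nρ/(1−ρ+nρ))^{−n+j} for j = 1, …, n−1. (In particular, the eigenvalues of C_n(ρ) are 1+(n−1)ρ with multiplicity 1 and 1−ρ with multiplicity n−1, and the coefficients X₁, X₂,1, …, X₂,n−1 are the characteristic coefficients of C_n(ρ).) -/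
/-!
`I + ξ C_n(ρ)` is the scalar matrix `1 + ξ(1 - ρ)` plus the rank-one matrix `ξρ 𝟙𝟙ᵀ`, so its
determinant `a b^(n-1)`, with `a = 1 + ξ(1 + (n-1)ρ)` and `b = 1 + ξ(1 - ρ)`, is read off the
characteristic polynomial of a rank-one matrix. The two factors satisfy `b - c = k a` identically
in `ξ`, with `c = nρ/(1 - ρ + nρ)` and `k = (1 - ρ)/(1 - ρ + nρ)`; the expansion of `(a b^m)⁻¹`
then follows by induction on `m` from `(a b^(m+1))⁻¹ = c⁻¹ ((a b^m)⁻¹ - k b^(-(m+1)))`.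
-/

open Matrix

noncomputable section

/-- The `n × n` constant correlation matrix `C_n(ρ)`: ones on the diagonal,
`ρ` off the diagonal. -/
def constCorr (n : ℕ) (ρ : ℝ) : Matrix (Fin n) (Fin n) ℝ :=
  Matrix.of fun i j => if i = j then 1 else ρ

open Finset

theorem Matrix.det_scalar_add_vecMulVec {n R : Type*} [Fintype n] [DecidableEq n] [CommRing R]
    (a : R) (u v : n → R) :
    (scalar n a + vecMulVec u v).det = a ^ Fintype.card n + (u ⬝ᵥ v) * a ^ (Fintype.card n - 1) := by
  rw [← sub_neg_eq_add, ← neg_vecMulVec, ← eval_charpoly, charpoly_vecMulVec]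
  simp [neg_dotProduct]

lemma one_add_smul_constCorr (n : ℕ) (ρ ξ : ℝ) :
    1 + ξ • constCorr n ρ = scalar (Fin n) (1 + ξ * (1 - ρ)) + vecMulVec (fun _ => ξ * ρ) 1 := by
  ext i j
  rcases eq_or_ne i j with rfl | h
  · simp only [constCorr, smul_of, Matrix.add_apply, one_apply_eq, of_apply, Pi.smul_apply,
      ↓reduceIte, smul_eq_mul, mul_one, scalar_apply, vecMulVec_one, diagonal_apply_eq,
      replicateCol_apply]
    ring
  · simp [constCorr, h]

lemma det_one_add_smul_constCorr {n : ℕ} (hn : n ≠ 0) (ρ ξ : ℝ) :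
    (1 + ξ • constCorr n ρ).det = (1 + ξ * (1 + ((n : ℝ) - 1) * ρ)) * (1 + ξ * (1 - ρ)) ^ (n - 1) := by
  obtain ⟨m, rfl⟩ := Nat.exists_eq_add_one_of_ne_zero hn
  rw [one_add_smul_constCorr, det_scalar_add_vecMulVec, dotProduct_one, sum_const, card_univ,
    Fintype.card_fin, nsmul_eq_mul, Nat.add_sub_cancel, pow_succ]
  push_cast
  ring

lemma inv_mul_pow_eq_add_sum {K : Type*} [Field K] {a b c k : K} (ha : a ≠ 0) (hb : b ≠ 0)
    (hc : c ≠ 0) (h : b - c = k * a) (m : ℕ) :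
    (a * b ^ m)⁻¹ = c ^ (-(m : ℤ)) * a⁻¹ +
      ∑ j ∈ Icc 1 m, -k * c ^ ((j : ℤ) - m - 1) * (b ^ j)⁻¹ := by
  induction m with
  | zero => simp
  | succ m ih =>
    have hsum : ∑ j ∈ Icc 1 m, -k * c ^ ((j : ℤ) - (m + 1 : ℕ) - 1) * (b ^ j)⁻¹
        = c⁻¹ * ((a * b ^ m)⁻¹ - c ^ (-(m : ℤ)) * a⁻¹) := by
      rw [ih, add_sub_cancel_left, mul_sum]
      refine sum_congr rfl fun j _ => ?_
      rw [show (j : ℤ) - (m + 1 : ℕ) - 1 = ((j : ℤ) - m - 1) + -1 by push_cast; ring,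
        zpow_add₀ hc, _root_.zpow_neg_one]
      ring
    rw [sum_Icc_succ_top (by omega), hsum, Nat.cast_succ, neg_add, zpow_add₀ hc, sub_self,
      zero_sub, _root_.zpow_neg_one, pow_succ]
    have hstep : (a * (b ^ m * b))⁻¹ = c⁻¹ * (a * b ^ m)⁻¹ - k * c⁻¹ * (b ^ m * b)⁻¹ := by
      field_simp
      linear_combination -h
    rw [hstep]
    ring

/-- **Characteristic coefficients of the constant correlation matrix**
(Example: partial fraction expansion of `det(I + ξ C_n(ρ))⁻¹`): for `n ≥ 2`,
`ρ ∈ (0,1)` and admissible `ξ`,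
`det(I + ξ C_n(ρ))⁻¹ = (1+ξ(1+(n−1)ρ))⁻¹ (1+ξ(1−ρ))^{−(n−1)}`
`  = X₁ (1+ξ(1+(n−1)ρ))⁻¹ + ∑_{j=1}^{n−1} X₂ⱼ (1+ξ(1−ρ))^{−j}`,
where `X₁ = (nρ/(1−ρ+nρ))^{−n+1}` and
`X₂ⱼ = −((1−ρ)/(1−ρ+nρ)) (nρ/(1−ρ+nρ))^{−n+j}`. -/
theorem constCorr_characteristic_coefficients
    (n : ℕ) (hn : 2 ≤ n) (ρ : ℝ) (hρ : ρ ∈ Set.Ioo (0 : ℝ) 1) (ξ : ℝ)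
    (h1 : 1 + ξ * (1 + ((n : ℝ) - 1) * ρ) ≠ 0)
    (h2 : 1 + ξ * (1 - ρ) ≠ 0) :
    (Matrix.det ((1 : Matrix (Fin n) (Fin n) ℝ) + ξ • constCorr n ρ))⁻¹
        = (1 + ξ * (1 + ((n : ℝ) - 1) * ρ))⁻¹ * ((1 + ξ * (1 - ρ)) ^ (n - 1))⁻¹
    ∧ (Matrix.det ((1 : Matrix (Fin n) (Fin n) ℝ) + ξ • constCorr n ρ))⁻¹
        = ((n : ℝ) * ρ / (1 - ρ + (n : ℝ) * ρ)) ^ (-(n : ℤ) + 1)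
            * (1 + ξ * (1 + ((n : ℝ) - 1) * ρ))⁻¹
          + ∑ j ∈ Finset.Icc 1 (n - 1),
              (-((1 - ρ) / (1 - ρ + (n : ℝ) * ρ))
                  * ((n : ℝ) * ρ / (1 - ρ + (n : ℝ) * ρ)) ^ (-(n : ℤ) + (j : ℤ)))
                * ((1 + ξ * (1 - ρ)) ^ j)⁻¹ := by
  obtain ⟨hρ_pos, -⟩ := hρ
  have hn_pos : 1 ≤ n := by omega
  have hn_real : (1 : ℝ) ≤ n := by exact_mod_cast hn_pos
  have hD : 0 < 1 - ρ + (n : ℝ) * ρ := by nlinarith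
  have hc : (n : ℝ) * ρ / (1 - ρ + n * ρ) ≠ 0 := div_ne_zero (by positivity) hD.ne'
  have hbc : 1 + ξ * (1 - ρ) - n * ρ / (1 - ρ + n * ρ)
      = (1 - ρ) / (1 - ρ + n * ρ) * (1 + ξ * (1 + ((n : ℝ) - 1) * ρ)) := by
    rw [div_mul_eq_mul_div, eq_div_iff hD.ne', sub_mul, div_mul_cancel₀ _ hD.ne']
    ring
  have hdet := det_one_add_smul_constCorr (by omega : n ≠ 0) ρ ξ
  refine ⟨by rw [hdet, mul_inv], ?_⟩
  rw [hdet, inv_mul_pow_eq_add_sum h1 h2 hc hbc (n - 1), Nat.cast_sub hn_pos, Nat.cast_one]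
  congr 1
  · rw [show -((n : ℤ) - 1) = -n + 1 by ring]
  · refine sum_congr rfl fun j _ => ?_
    rw [show (j : ℤ) - (n - 1) - 1 = -n + j by ring]

end
end
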